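/- Let $H$ be a real Hilbert space, $P_N : H \to H$ nonexpansive, and $J' : H \to H$ Lipschitz with constant $C_1$ and uniformly monotone with constant $C_2 > 0$. Fix $\rho$ with $\alpha^2 := 1 - 2C_2\rho + (1 + 2C_1^2)\rho^2 \in (0,1)$. Suppose $u^{*,N}$ satisfies $u^{*,N} = P_N(u^{*,N} - \rho J'(u^{*,N}))$, and the perturbed iteration $u^{i+1,N} = P_N(u^{i,N} - \rho J'_N(u^{i,N}))$ is run with $\sup_i \|J'(u^{i,N}) - J'_N(u^{i,N})\| \le \varepsilon$. Then for all $i$, $\|u^{*,N} - u^{i+1,N}\| \le \alpha^{i+1}\|u^{*,N} - u^{0,N}\| + \sqrt{1 + 2\rho^2}\,\frac{1 - \alpha^{i+1}}{1-\alpha}\,\varepsilon$. -/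

import Mathlib

/-!
Expanding `‖(x - y) - ρ (J' x - J' y)‖²` and bounding the cross term by strong monotonicity and
the last term by the Lipschitz bound shows that `v ↦ v - ρ J' v` is `α`-Lipschitz. As `P_N` is
nonexpansive, the exact step `v ↦ P_N (v - ρ J' v)` contracts towards its fixed point `u*` by `α`,
and using `J'_N` instead of `J'` costs at most `ρ ε ≤ √(1 + 2ρ²) ε`. So `aᵢ := ‖u* - uⁱ‖` obeys
`aᵢ₊₁ ≤ α aᵢ + √(1 + 2ρ²) ε`, and unrolling this recursion gives a geometric sum.
-/

open Finset

theorem le_pow_mul_add_mul_geom_sum_of_le_mul_add {R : Type*} [CommSemiring R] [PartialOrder R]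
    [IsOrderedRing R] {a : ℕ → R} {α b : R} (hα : 0 ≤ α) (h : ∀ n, a (n + 1) ≤ α * a n + b)
    (n : ℕ) : a n ≤ α ^ n * a 0 + b * ∑ k ∈ range n, α ^ k := by
  induction n with
  | zero => simp
  | succ n ih =>
    calc a (n + 1) ≤ α * a n + b := h n
      _ ≤ α * (α ^ n * a 0 + b * ∑ k ∈ range n, α ^ k) + b := by gcongr
      _ = α ^ (n + 1) * a 0 + b * ∑ k ∈ range (n + 1), α ^ k := by
        rw [geom_sum_succ]; ring

section GradientStep

variable {H : Type*} [NormedAddCommGroup H] [InnerProductSpace ℝ H]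

theorem norm_sub_smul_sq_le {a d : H} {C1 C2 ρ : ℝ} (hρ : 0 ≤ ρ) (hLip : ‖d‖ ≤ C1 * ‖a‖)
    (hmono : C2 * ‖a‖ ^ 2 ≤ inner ℝ d a) :
    ‖a - ρ • d‖ ^ 2 ≤ (1 - 2 * C2 * ρ + C1 ^ 2 * ρ ^ 2) * ‖a‖ ^ 2 := by
  have hd_sq : ‖d‖ ^ 2 ≤ C1 ^ 2 * ‖a‖ ^ 2 := by
    rw [← mul_pow]; exact pow_le_pow_left₀ (norm_nonneg d) hLip 2
  have hexpand : ‖a - ρ • d‖ ^ 2 = ‖a‖ ^ 2 - 2 * ρ * inner ℝ d a + ρ ^ 2 * ‖d‖ ^ 2 := by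
    rw [norm_sub_sq_real, real_inner_smul_right, real_inner_comm, norm_smul, Real.norm_eq_abs,
      abs_of_nonneg hρ]
    ring
  rw [hexpand]
  nlinarith [mul_le_mul_of_nonneg_left hmono hρ, mul_le_mul_of_nonneg_left hd_sq (sq_nonneg ρ)]

theorem norm_gradientStep_sub_le {F : H → H} {C1 C2 ρ : ℝ} (hρ : 0 ≤ ρ)
    (hLip : ∀ u v, ‖F u - F v‖ ≤ C1 * ‖u - v‖)
    (hmono : ∀ u v, C2 * ‖u - v‖ ^ 2 ≤ inner ℝ (F u - F v) (u - v)) (x y : H) :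
    ‖(x - ρ • F x) - (y - ρ • F y)‖ ≤ √(1 - 2 * C2 * ρ + C1 ^ 2 * ρ ^ 2) * ‖x - y‖ := by
  have hrewrite : (x - ρ • F x) - (y - ρ • F y) = (x - y) - ρ • (F x - F y) := by
    rw [smul_sub]; abel
  rw [hrewrite, ← Real.sqrt_sq (norm_nonneg _), ← Real.sqrt_sq (norm_nonneg (x - y)),
    ← Real.sqrt_mul' _ (sq_nonneg _)]
  exact Real.sqrt_le_sqrt (norm_sub_smul_sq_le hρ (hLip x y) (hmono x y))

theorem norm_sub_projGradientStep_le {P F G : H → H} {C1 C2 ρ : ℝ} (hρ : 0 ≤ ρ)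
    (hP : ∀ w z, ‖P w - P z‖ ≤ ‖w - z‖) (hLip : ∀ u v, ‖F u - F v‖ ≤ C1 * ‖u - v‖)
    (hmono : ∀ u v, C2 * ‖u - v‖ ^ 2 ≤ inner ℝ (F u - F v) (u - v))
    {ustar : H} (hfix : ustar = P (ustar - ρ • F ustar)) (v : H) :
    ‖ustar - P (v - ρ • G v)‖
      ≤ √(1 - 2 * C2 * ρ + C1 ^ 2 * ρ ^ 2) * ‖ustar - v‖ + ρ * ‖F v - G v‖ := by
  have hsplit : (ustar - ρ • F ustar) - (v - ρ • G v)
      = ((ustar - ρ • F ustar) - (v - ρ • F v)) - ρ • (F v - G v) := by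
    rw [smul_sub]; abel
  calc ‖ustar - P (v - ρ • G v)‖
      = ‖P (ustar - ρ • F ustar) - P (v - ρ • G v)‖ := by rw [← hfix]
    _ ≤ ‖(ustar - ρ • F ustar) - (v - ρ • G v)‖ := hP _ _
    _ ≤ ‖(ustar - ρ • F ustar) - (v - ρ • F v)‖ + ‖ρ • (F v - G v)‖ := by
      rw [hsplit]; exact norm_sub_le _ _
    _ ≤ √(1 - 2 * C2 * ρ + C1 ^ 2 * ρ ^ 2) * ‖ustar - v‖ + ρ * ‖F v - G v‖ := by
      rw [norm_smul, Real.norm_eq_abs, abs_of_nonneg hρ]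
      gcongr
      exact norm_gradientStep_sub_le hρ hLip hmono ustar v

end GradientStep

theorem inexact_gradient_projection_error_general {H : Type*} [NormedAddCommGroup H]
    [InnerProductSpace ℝ H]
    (PN J' J'N : H → H) (C1 C2 ρ α ε : ℝ) (hρ : 0 < ρ)
    (hPN : ∀ w z : H, ‖PN w - PN z‖ ≤ ‖w - z‖)
    (hLip : ∀ u v : H, ‖J' u - J' v‖ ≤ C1 * ‖u - v‖)
    (hmono : ∀ u v : H, C2 * ‖u - v‖ ^ 2 ≤ (inner ℝ (J' u - J' v) (u - v) : ℝ))
    (hα : α = Real.sqrt (1 - 2 * C2 * ρ + (1 + 2 * C1 ^ 2) * ρ ^ 2))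
    (hin1 : 1 - 2 * C2 * ρ + (1 + 2 * C1 ^ 2) * ρ ^ 2 < 1)
    (ustar : H) (hfix : ustar = PN (ustar - ρ • J' ustar))
    (u : ℕ → H) (hit : ∀ i, u (i + 1) = PN (u i - ρ • J'N (u i)))
    (herr : ∀ i, ‖J' (u i) - J'N (u i)‖ ≤ ε) :
    ∀ i, ‖ustar - u (i + 1)‖
      ≤ α ^ (i + 1) * ‖ustar - u 0‖
        + Real.sqrt (1 + 2 * ρ ^ 2) * ((1 - α ^ (i + 1)) / (1 - α)) * ε := by
  have hα0 : 0 ≤ α := hα ▸ Real.sqrt_nonneg _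
  have hα1 : α < 1 := by rw [hα, Real.sqrt_lt' one_pos, one_pow]; exact hin1
  have hρK : ρ ≤ √(1 + 2 * ρ ^ 2) := Real.le_sqrt_of_sq_le (by nlinarith)
  have hstep : ∀ i, ‖ustar - u (i + 1)‖ ≤ α * ‖ustar - u i‖ + √(1 + 2 * ρ ^ 2) * ε := by
    intro i
    calc ‖ustar - u (i + 1)‖
        ≤ √(1 - 2 * C2 * ρ + C1 ^ 2 * ρ ^ 2) * ‖ustar - u i‖ + ρ * ‖J' (u i) - J'N (u i)‖ := by
          rw [hit i]; exact norm_sub_projGradientStep_le hρ.le hPN hLip hmono hfix (u i)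
      _ ≤ α * ‖ustar - u i‖ + √(1 + 2 * ρ ^ 2) * ε := by
          rw [hα]
          gcongr
          · nlinarith [sq_nonneg (C1 * ρ)]
          · exact herr i
  intro i
  have hgeom :=
    le_pow_mul_add_mul_geom_sum_of_le_mul_add (a := fun i ↦ ‖ustar - u i‖) hα0 hstep (i + 1)
  rwa [geom_sum_eq hα1.ne, ← neg_div_neg_eq, neg_sub, neg_sub, mul_right_comm _ ε] at hgeom

theorem inexact_gradient_projection_error {H : Type*} [NormedAddCommGroup H]
    [InnerProductSpace ℝ H]
    (PN J' J'N : H → H) (C1 C2 ρ α ε : ℝ) (hρ : 0 < ρ) (hC2 : 0 < C2) (hε : 0 ≤ ε)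
    (hPN : ∀ w z : H, ‖PN w - PN z‖ ≤ ‖w - z‖)
    (hLip : ∀ u v : H, ‖J' u - J' v‖ ≤ C1 * ‖u - v‖)
    (hmono : ∀ u v : H, C2 * ‖u - v‖ ^ 2 ≤ (inner ℝ (J' u - J' v) (u - v) : ℝ))
    (hα : α = Real.sqrt (1 - 2 * C2 * ρ + (1 + 2 * C1 ^ 2) * ρ ^ 2))
    (hin : 0 < 1 - 2 * C2 * ρ + (1 + 2 * C1 ^ 2) * ρ ^ 2)
    (hin1 : 1 - 2 * C2 * ρ + (1 + 2 * C1 ^ 2) * ρ ^ 2 < 1)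
    (ustar : H) (hfix : ustar = PN (ustar - ρ • J' ustar))
    (u : ℕ → H) (hit : ∀ i, u (i + 1) = PN (u i - ρ • J'N (u i)))
    (herr : ∀ i, ‖J' (u i) - J'N (u i)‖ ≤ ε) :
    ∀ i, ‖ustar - u (i + 1)‖
      ≤ α ^ (i + 1) * ‖ustar - u 0‖
        + Real.sqrt (1 + 2 * ρ ^ 2) * ((1 - α ^ (i + 1)) / (1 - α)) * ε :=
  inexact_gradient_projection_error_general PN J' J'N C1 C2 ρ α ε hρ hPN hLip hmono hα hin1 ustar
    hfix u hit herr
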